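/- Let r > 4 and 2 < α ≤ 3. For any finite A ⊂ ℤ² and ℓ ≥ 0, the number of edge-boundary pairs of admissible ℓ-cubes satisfies |∂𝔠_ℓ(A)| ≤ Q_ℓ(A) / (b₆ · 2^{rℓ(4-α)}), where b₆ = 1/(16·3^α). -/

import Mathlib

/-- Long-range interaction in `ℤ²`: `|x - y|^{-α}` with Euclidean distance. -/
noncomputable def Jint2 (α : ℝ) (p q : ℤ × ℤ) : ℝ :=
  (Real.sqrt (((p.1 - q.1 : ℤ) : ℝ) ^ 2 + ((p.2 - q.2 : ℤ) : ℝ) ^ 2)) ^ (-α)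

/-- The cube of side `s` in `ℤ²` with lower corner `s • x`. -/
noncomputable def cube2 (s : ℕ) (x : ℤ × ℤ) : Finset (ℤ × ℤ) :=
  Finset.Ico ((s : ℤ) * x.1) ((s : ℤ) * (x.1 + 1)) ×ˢ
    Finset.Ico ((s : ℤ) * x.2) ((s : ℤ) * (x.2 + 1))

/-- The `ℓ`-cube indexed by `x`, shrunk by an outer layer of thickness `2^{r(ℓ-1)}`. -/
noncomputable def hatcube2 (r ℓ : ℕ) (x : ℤ × ℤ) : Finset (ℤ × ℤ) :=
  Finset.Ico ((2 ^ (r * ℓ) : ℤ) * x.1 + 2 ^ (r * ℓ) / 2 ^ r)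
             ((2 ^ (r * ℓ) : ℤ) * (x.1 + 1) - 2 ^ (r * ℓ) / 2 ^ r) ×ˢ
  Finset.Ico ((2 ^ (r * ℓ) : ℤ) * x.2 + 2 ^ (r * ℓ) / 2 ^ r)
             ((2 ^ (r * ℓ) : ℤ) * (x.2 + 1) - 2 ^ (r * ℓ) / 2 ^ r)

/-- `Q_ℓ(A)`. -/
noncomputable def Qlev (r : ℕ) (α : ℝ) (A : Finset (ℤ × ℤ)) (ℓ : ℕ) : ℝ :=
  ∑' x : ℤ × ℤ, ∑' x' : ℤ × ℤ,
    if |x.1 - x'.1| + |x.2 - x'.2| = 1 ∧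
        (cube2 (2 ^ (r * ℓ)) x).card ≤
          2 * ((cube2 (2 ^ (r * ℓ)) x).filter (· ∈ A)).card ∧
        2 * ((cube2 (2 ^ (r * ℓ)) x').filter (· ∈ A)).card <
          (cube2 (2 ^ (r * ℓ)) x').card
    then ∑ p ∈ (hatcube2 r ℓ x).filter (· ∈ A),
           ∑ q ∈ (hatcube2 r ℓ x').filter (· ∉ A), Jint2 α p q
    else 0

/-!
Removing the outer layer of thickness `2^{r(ℓ-1)} ≤ 2^{rℓ}/32` from an `ℓ`-cube of side `L = 2^{rℓ}`
discards at most `L²/8` points. Hence an admissible cube `C` keeps at least `3L²/8` points of `A`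
in `Ĉ`, and a non-admissible neighbour `C'` keeps at least `3L²/8` points of `Aᶜ` in `Ĉ'`. Such
points are distinct and lie at distance at most `2√2 L ≤ 3L`, so
`J(A ∩ Ĉ, Aᶜ ∩ Ĉ') ≥ (9/64) L⁴ (3L)^{-α} ≥ b₆ L^{4-α}`. Only finitely many pairs `(C, C')`
contribute, so the bound can be summed over the boundary.
-/

open Finset

section DoubleSum

variable {ι κ M : Type*} [AddCommMonoid M] [TopologicalSpace M]
  {P : ι → κ → Prop} [∀ x y, Decidable (P x y)]

theorem tsum_tsum_ite_eq_sum_sum (s : Finset ι) (t : ι → Finset κ)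
    (hP : ∀ x y, P x y → x ∈ s ∧ y ∈ t x) (f : ι → κ → M) :
    ∑' x, ∑' y, (if P x y then f x y else 0) = ∑ x ∈ s, ∑ y ∈ t x, if P x y then f x y else 0 := by
  rw [tsum_eq_sum (s := s)]
  · exact sum_congr rfl fun x _ => tsum_eq_sum fun y hy => if_neg fun h => hy (hP x y h).2
  · intro x hx
    rw [tsum_congr fun y => if_neg fun h => hx (hP x y h).1, tsum_zero]

theorem tsum_tsum_ite_le_tsum_tsum_ite [PartialOrder M] [IsOrderedAddMonoid M]
    (s : Finset ι) (t : ι → Finset κ) (hP : ∀ x y, P x y → x ∈ s ∧ y ∈ t x)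
    {f g : ι → κ → M} (hfg : ∀ x y, P x y → f x y ≤ g x y) :
    ∑' x, ∑' y, (if P x y then f x y else 0) ≤ ∑' x, ∑' y, (if P x y then g x y else 0) := by
  rw [tsum_tsum_ite_eq_sum_sum s t hP, tsum_tsum_ite_eq_sum_sum s t hP]
  gcongr with x _ y _
  split_ifs with h
  · exact hfg x y h
  · rfl

end DoubleSum

theorem card_filter_le_card_filter_add_card_sdiff {α : Type*} [DecidableEq α] (s t : Finset α)
    (p : α → Prop) [DecidablePred p] :
    #(s.filter p) ≤ #(t.filter p) + #(s \ t) := by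
  refine (card_le_card fun a ha => ?_).trans (card_union_le _ _)
  rw [mem_filter] at ha
  by_cases hat : a ∈ t
  · exact mem_union_left _ (mem_filter.2 ⟨hat, ha.2⟩)
  · exact mem_union_right _ (mem_sdiff.2 ⟨ha.1, hat⟩)

theorem abs_sub_le_one_of_adj {x x' : ℤ × ℤ} (h : |x.1 - x'.1| + |x.2 - x'.2| = 1) :
    |x.1 - x'.1| ≤ 1 ∧ |x.2 - x'.2| ≤ 1 :=
  ⟨by linarith [abs_nonneg (x.2 - x'.2)], by linarith [abs_nonneg (x.1 - x'.1)]⟩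

theorem mem_neighbours_of_adj {x x' : ℤ × ℤ} (h : |x.1 - x'.1| + |x.2 - x'.2| = 1) :
    x' ∈ Icc (x.1 - 1) (x.1 + 1) ×ˢ Icc (x.2 - 1) (x.2 + 1) := by
  obtain ⟨h1, h2⟩ := abs_sub_le_one_of_adj h
  rw [abs_le] at h1 h2
  simp only [mem_product, mem_Icc]
  omega

theorem rpow_neg_le_Jint2 {α R : ℝ} (hα : 0 ≤ α) {p q : ℤ × ℤ} (hpq : p ≠ q) (hR : 0 ≤ R)
    (hdist : ((p.1 - q.1 : ℤ) : ℝ) ^ 2 + ((p.2 - q.2 : ℤ) : ℝ) ^ 2 ≤ R ^ 2) :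
    R ^ (-α) ≤ Jint2 α p q := by
  have hpos : 0 < ((p.1 - q.1 : ℤ) : ℝ) ^ 2 + ((p.2 - q.2 : ℤ) : ℝ) ^ 2 := by
    have : p.1 - q.1 ≠ 0 ∨ p.2 - q.2 ≠ 0 := by
      contrapose! hpq
      exact Prod.ext (sub_eq_zero.1 hpq.1) (sub_eq_zero.1 hpq.2)
    rcases this with h | h
    · have : ((p.1 - q.1 : ℤ) : ℝ) ≠ 0 := by exact_mod_cast h
      positivity
    · have : ((p.2 - q.2 : ℤ) : ℝ) ≠ 0 := by exact_mod_cast h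
      positivity
  exact Real.rpow_le_rpow_of_nonpos (Real.sqrt_pos.2 hpos)
    (Real.sqrt_le_iff.2 ⟨hR, hdist⟩) (neg_nonpos.2 hα)

theorem b6_mul_rpow_le {α L S T : ℝ} (hL : 0 < L) (hS : 3 * L ^ 2 ≤ 8 * S)
    (hT : 3 * L ^ 2 ≤ 8 * T) :
    1 / (16 * 3 ^ α) * L ^ (4 - α) ≤ S * T * (3 * L) ^ (-α) := by
  have hsplit : L ^ (4 - α) = L ^ 4 * L ^ (-α) := by
    rw [sub_eq_add_neg, Real.rpow_add hL, show (4 : ℝ) = (4 : ℕ) by norm_num, Real.rpow_natCast]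
  have hL4 : L ^ 4 / 16 ≤ S * T := by nlinarith
  calc 1 / (16 * 3 ^ α) * L ^ (4 - α) = L ^ 4 / 16 * (3 ^ (-α) * L ^ (-α)) := by
        rw [hsplit, Real.rpow_neg (show (0 : ℝ) ≤ 3 by norm_num)]; ring
    _ ≤ S * T * (3 ^ (-α) * L ^ (-α)) := by gcongr
    _ = S * T * (3 * L) ^ (-α) := by rw [Real.mul_rpow (by norm_num) hL.le]

theorem card_cube2 (s : ℕ) (x : ℤ × ℤ) : #(cube2 s x) = s ^ 2 := by
  have h : ∀ a : ℤ, #(Ico ((s : ℤ) * a) (s * (a + 1))) = s := fun a => by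
    rw [Int.card_Ico, mul_add_one, add_sub_cancel_left, Int.toNat_natCast]
  rw [cube2, card_product, h, h, sq]

theorem ediv_eq_of_mem_cube2 {s : ℕ} {x p : ℤ × ℤ} (hp : p ∈ cube2 s x) :
    (p.1 / s, p.2 / s) = x := by
  simp only [cube2, mem_product, mem_Ico, mul_add_one] at hp
  have hs : (0 : ℤ) < s := by linarith [hp.1.1, hp.1.2]
  ext
  · exact (Int.ediv_eq_iff_of_pos hs).2 ⟨by linarith [hp.1.1], by linarith [hp.1.2]⟩
  · exact (Int.ediv_eq_iff_of_pos hs).2 ⟨by linarith [hp.2.1], by linarith [hp.2.2]⟩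

theorem sq_sub_le_of_mem_Ico {s m n a b : ℤ} (hs : 0 ≤ s) (hmn : |m - n| ≤ 1)
    (ha : a ∈ Ico (s * m) (s * (m + 1))) (hb : b ∈ Ico (s * n) (s * (n + 1))) :
    (a - b) ^ 2 ≤ 4 * s ^ 2 := by
  rw [mem_Ico] at ha hb
  rw [abs_le] at hmn
  have h1 : s * (m - n) ≤ s := by nlinarith
  have h2 : -s ≤ s * (m - n) := by nlinarith
  nlinarith [sq_le_sq' (show -(2 * s) ≤ a - b by linarith) (show a - b ≤ 2 * s by linarith)]

theorem sq_dist_le_of_mem_cube2_of_adj {s : ℕ} {x x' p q : ℤ × ℤ}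
    (hadj : |x.1 - x'.1| + |x.2 - x'.2| = 1) (hp : p ∈ cube2 s x) (hq : q ∈ cube2 s x') :
    (p.1 - q.1) ^ 2 + (p.2 - q.2) ^ 2 ≤ 8 * (s : ℤ) ^ 2 := by
  obtain ⟨h1, h2⟩ := abs_sub_le_one_of_adj hadj
  rw [cube2, mem_product] at hp hq
  linarith [sq_sub_le_of_mem_Ico s.cast_nonneg h1 hp.1 hq.1,
    sq_sub_le_of_mem_Ico s.cast_nonneg h2 hp.2 hq.2]

def IsAdmissible (s : ℕ) (A : Finset (ℤ × ℤ)) (x : ℤ × ℤ) : Prop :=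
  #(cube2 s x) ≤ 2 * #((cube2 s x).filter (· ∈ A))

theorem mem_image_ediv_of_isAdmissible {s : ℕ} (hs : 0 < s) {A : Finset (ℤ × ℤ)} {x : ℤ × ℤ}
    (hx : IsAdmissible s A x) : x ∈ A.image fun p : ℤ × ℤ => (p.1 / (s : ℤ), p.2 / (s : ℤ)) := by
  rw [IsAdmissible, card_cube2] at hx
  obtain ⟨p, hp⟩ : ((cube2 s x).filter (· ∈ A)).Nonempty := by
    rw [← card_pos]; nlinarith
  rw [mem_filter] at hp
  exact mem_image.2 ⟨p, hp.2, ediv_eq_of_mem_cube2 hp.1⟩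

section HatCubes

variable {r ℓ : ℕ}

theorem hatcube2_subset_cube2 (x : ℤ × ℤ) : hatcube2 r ℓ x ⊆ cube2 (2 ^ (r * ℓ)) x := by
  have ht : (0 : ℤ) ≤ 2 ^ (r * ℓ) / 2 ^ r := by positivity
  intro p hp
  simp only [hatcube2, cube2, mem_product, mem_Ico, Nat.cast_pow, Nat.cast_ofNat] at hp ⊢
  omega

theorem thirtytwo_mul_margin_le (hr : 4 < r) : 32 * ((2 : ℤ) ^ (r * ℓ) / 2 ^ r) ≤ 2 ^ (r * ℓ) := by
  have h32 : (32 : ℤ) ≤ 2 ^ r :=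
    (pow_le_pow_right₀ (by norm_num) hr : (2 : ℤ) ^ 5 ≤ 2 ^ r)
  calc 32 * ((2 : ℤ) ^ (r * ℓ) / 2 ^ r) ≤ 2 ^ r * (2 ^ (r * ℓ) / 2 ^ r) := by gcongr
    _ ≤ 2 ^ (r * ℓ) := Int.mul_ediv_self_le (by positivity)

theorem card_hatcube2 (hr : 0 < r) (x : ℤ × ℤ) :
    (#(hatcube2 r ℓ x) : ℤ) = (2 ^ (r * ℓ) - 2 * (2 ^ (r * ℓ) / 2 ^ r)) ^ 2 := by
  have hmargin : 2 * ((2 : ℤ) ^ (r * ℓ) / 2 ^ r) ≤ 2 ^ (r * ℓ) :=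
    calc 2 * ((2 : ℤ) ^ (r * ℓ) / 2 ^ r) ≤ 2 ^ r * (2 ^ (r * ℓ) / 2 ^ r) := by
          gcongr
          exact le_self_pow₀ (by norm_num) hr.ne'
      _ ≤ 2 ^ (r * ℓ) := Int.mul_ediv_self_le (by positivity)
  rw [hatcube2, card_product, Nat.cast_mul, Int.card_Ico_of_le _ _ (by linarith),
    Int.card_Ico_of_le _ _ (by linarith)]
  ring

theorem eight_mul_card_cube2_sdiff_hatcube2_le (hr : 4 < r) (x : ℤ × ℤ) :
    8 * #(cube2 (2 ^ (r * ℓ)) x \ hatcube2 r ℓ x) ≤ #(cube2 (2 ^ (r * ℓ)) x) := by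
  have hmargin := thirtytwo_mul_margin_le (ℓ := ℓ) hr
  have ht : (0 : ℤ) ≤ 2 ^ (r * ℓ) / 2 ^ r := by positivity
  have hhat := card_hatcube2 (r := r) (ℓ := ℓ) (by omega) x
  have hsub := card_le_card (hatcube2_subset_cube2 (r := r) (ℓ := ℓ) x)
  rw [card_sdiff_of_subset (hatcube2_subset_cube2 x)]
  zify [hsub]
  rw [hhat, card_cube2]
  push_cast
  nlinarith

theorem eight_mul_card_filter_cube2_le (hr : 4 < r) (x : ℤ × ℤ) (p : ℤ × ℤ → Prop)
    [DecidablePred p] :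
    8 * #((cube2 (2 ^ (r * ℓ)) x).filter p) ≤
      8 * #((hatcube2 r ℓ x).filter p) + #(cube2 (2 ^ (r * ℓ)) x) := by
  have := card_filter_le_card_filter_add_card_sdiff (cube2 (2 ^ (r * ℓ)) x) (hatcube2 r ℓ x) p
  have := eight_mul_card_cube2_sdiff_hatcube2_le (ℓ := ℓ) hr x
  omega

theorem three_mul_card_cube2_le_of_isAdmissible (hr : 4 < r) {A : Finset (ℤ × ℤ)} {x : ℤ × ℤ}
    (hx : IsAdmissible (2 ^ (r * ℓ)) A x) :
    3 * #(cube2 (2 ^ (r * ℓ)) x) ≤ 8 * #((hatcube2 r ℓ x).filter (· ∈ A)) := by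
  have := eight_mul_card_filter_cube2_le (ℓ := ℓ) hr x (· ∈ A)
  rw [IsAdmissible] at hx
  omega

theorem three_mul_card_cube2_le_of_not_isAdmissible (hr : 4 < r) {A : Finset (ℤ × ℤ)}
    {x : ℤ × ℤ} (hx : ¬IsAdmissible (2 ^ (r * ℓ)) A x) :
    3 * #(cube2 (2 ^ (r * ℓ)) x) ≤ 8 * #((hatcube2 r ℓ x).filter (· ∉ A)) := by
  have := eight_mul_card_filter_cube2_le (ℓ := ℓ) hr x (· ∉ A)
  have := card_filter_add_card_filter_not (s := cube2 (2 ^ (r * ℓ)) x) (· ∈ A)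
  rw [IsAdmissible] at hx
  omega

theorem b6_mul_le_J_hatcube2 (hr : 4 < r) {α : ℝ} (hα : 0 ≤ α) {A : Finset (ℤ × ℤ)}
    {x x' : ℤ × ℤ} (hadj : |x.1 - x'.1| + |x.2 - x'.2| = 1)
    (hx : IsAdmissible (2 ^ (r * ℓ)) A x) (hx' : ¬IsAdmissible (2 ^ (r * ℓ)) A x') :
    1 / (16 * 3 ^ α) * (2 : ℝ) ^ (((r * ℓ : ℕ) : ℝ) * (4 - α)) ≤
      ∑ p ∈ (hatcube2 r ℓ x).filter (· ∈ A), ∑ q ∈ (hatcube2 r ℓ x').filter (· ∉ A),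
        Jint2 α p q := by
  set S := (hatcube2 r ℓ x).filter (· ∈ A)
  set T := (hatcube2 r ℓ x').filter (· ∉ A)
  set L : ℝ := 2 ^ (r * ℓ) with hL
  have hS : 3 * L ^ 2 ≤ 8 * (#S : ℝ) := by
    have := three_mul_card_cube2_le_of_isAdmissible hr hx
    rw [card_cube2] at this
    rw [hL]
    exact_mod_cast this
  have hT : 3 * L ^ 2 ≤ 8 * (#T : ℝ) := by
    have := three_mul_card_cube2_le_of_not_isAdmissible hr hx'
    rw [card_cube2] at this
    rw [hL]
    exact_mod_cast this
  have hJ : ∀ p ∈ S, ∀ q ∈ T, (3 * L) ^ (-α) ≤ Jint2 α p q := by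
    intro p hp q hq
    rw [mem_filter] at hp hq
    have hpq : p ≠ q := by rintro rfl; exact hq.2 hp.2
    have hdist : ((p.1 - q.1 : ℤ) : ℝ) ^ 2 + ((p.2 - q.2 : ℤ) : ℝ) ^ 2 ≤ 8 * L ^ 2 := by
      have := sq_dist_le_of_mem_cube2_of_adj hadj (hatcube2_subset_cube2 x hp.1)
        (hatcube2_subset_cube2 x' hq.1)
      rw [hL]
      exact_mod_cast this
    exact rpow_neg_le_Jint2 hα hpq (by positivity) (by nlinarith)
  calc 1 / (16 * 3 ^ α) * (2 : ℝ) ^ (((r * ℓ : ℕ) : ℝ) * (4 - α))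
      = 1 / (16 * 3 ^ α) * L ^ (4 - α) := by rw [Real.rpow_natCast_mul (by norm_num)]
    _ ≤ #S * #T * (3 * L) ^ (-α) := b6_mul_rpow_le (by positivity) hS hT
    _ = ∑ p ∈ S, ∑ q ∈ T, (3 * L) ^ (-α) := by simp only [sum_const, nsmul_eq_mul]; ring
    _ ≤ ∑ p ∈ S, ∑ q ∈ T, Jint2 α p q := sum_le_sum fun p hp => sum_le_sum fun q hq => hJ p hp q hq

end HatCubes

theorem stmt12_general (r : ℕ) (hr : 4 < r) (α : ℝ) (hα1 : 2 < α)
    (A : Finset (ℤ × ℤ)) (ℓ : ℕ) :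
    ∑' x : ℤ × ℤ, ∑' x' : ℤ × ℤ,
      (if |x.1 - x'.1| + |x.2 - x'.2| = 1 ∧
          (cube2 (2 ^ (r * ℓ)) x).card ≤
            2 * ((cube2 (2 ^ (r * ℓ)) x).filter (· ∈ A)).card ∧
          2 * ((cube2 (2 ^ (r * ℓ)) x').filter (· ∈ A)).card <
            (cube2 (2 ^ (r * ℓ)) x').card
       then (1 : ℝ) else 0) ≤
      Qlev r α A ℓ / ((1 / (16 * 3 ^ α)) * (2 : ℝ) ^ (((r * ℓ : ℕ) : ℝ) * (4 - α))) := by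
  have hb : 0 < 1 / (16 * 3 ^ α) * (2 : ℝ) ^ (((r * ℓ : ℕ) : ℝ) * (4 - α)) := by positivity
  rw [le_div_iff₀ hb, ← tsum_mul_right]
  simp_rw [← tsum_mul_right, ite_mul, one_mul, zero_mul]
  exact tsum_tsum_ite_le_tsum_tsum_ite (A.image fun p => (p.1 / 2 ^ (r * ℓ), p.2 / 2 ^ (r * ℓ)))
    (fun x => Icc (x.1 - 1) (x.1 + 1) ×ˢ Icc (x.2 - 1) (x.2 + 1))
    (fun _ _ h => ⟨by exact_mod_cast mem_image_ediv_of_isAdmissible (by positivity) h.2.1,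
      mem_neighbours_of_adj h.1⟩)
    (fun _ _ h => b6_mul_le_J_hatcube2 hr (by linarith) h.1 h.2.1 (not_le.2 h.2.2))

theorem stmt12 (r : ℕ) (hr : 4 < r) (α : ℝ) (hα1 : 2 < α) (hα2 : α ≤ 3)
    (A : Finset (ℤ × ℤ)) (ℓ : ℕ) :
    ∑' x : ℤ × ℤ, ∑' x' : ℤ × ℤ,
      (if |x.1 - x'.1| + |x.2 - x'.2| = 1 ∧
          (cube2 (2 ^ (r * ℓ)) x).card ≤
            2 * ((cube2 (2 ^ (r * ℓ)) x).filter (· ∈ A)).card ∧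
          2 * ((cube2 (2 ^ (r * ℓ)) x').filter (· ∈ A)).card <
            (cube2 (2 ^ (r * ℓ)) x').card
       then (1 : ℝ) else 0) ≤
      Qlev r α A ℓ / ((1 / (16 * 3 ^ α)) * (2 : ℝ) ^ (((r * ℓ : ℕ) : ℝ) * (4 - α))) :=
  stmt12_general r hr α hα1 A ℓ
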